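/- Let ξ ∈ ℝ with |ξ| < k_δ, where k_δ = ∫_0^δ w_s^{−2} ds. Then the deterministic forward–backward system μ'(t) = −w_t^{−2}·h(t), h'(t) = 0 on [0,T] with boundary conditions μ(0) = ξ and h(T) = g(μ(T)) has exactly three solutions, namely (μ(t), h(t)) = (ξ − A·k_t, A) for A ∈ {−1, ξ/k_δ, 1}. -/

import Mathlib

/-!
The backward equation forces `h` to be a constant `A`, and integrating the forward equation gives
`μ = ξ - A·k`. Since `k_T = k_δ + r_δ`, the terminal condition becomes the scalar fixed-point
equation `A = g(ξ - A·(k_δ + r_δ))`. On the linear branch of `g` it reduces to `A·k_δ = ξ`; on the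
saturated branches it gives `A = ∓1`, and `|ξ| < k_δ` is exactly what makes each of the three
candidates land on its own branch.
-/

open Set

section Calculus

variable {E : Type*} [NormedAddCommGroup E] [NormedSpace ℝ E]

theorem ContinuousOn.hasDerivWithinAt_integral_Icc [CompleteSpace E] {f : ℝ → E} {a b t : ℝ}
    (hf : ContinuousOn f (Icc a b)) (ht : t ∈ Icc a b) :
    HasDerivWithinAt (fun u => ∫ s in a..u, f s) (f t) (Icc a b) t := by
  have : Fact (t ∈ Icc a b) := ⟨ht⟩
  exact intervalIntegral.integral_hasDerivWithinAt_right
    ((hf.mono (Icc_subset_Icc le_rfl ht.2)).intervalIntegrable_of_Icc ht.1)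
    (hf.stronglyMeasurableAtFilter_nhdsWithin measurableSet_Icc t) (hf t ht)

theorem eq_of_hasDerivWithinAt_Icc_zero {f : ℝ → E} {a b : ℝ}
    (hf : ∀ t ∈ Icc a b, HasDerivWithinAt f 0 (Icc a b) t) : ∀ t ∈ Icc a b, f t = f a :=
  constant_of_has_deriv_right_zero (fun t ht => (hf t ht).continuousWithinAt)
    fun t ht => (hf t (Ico_subset_Icc_self ht)).mono_of_mem_nhdsWithin (Icc_mem_nhdsGE_of_mem ht)

end Calculus

theorem continuousOn_exp_integral_Icc {φ : ℝ → ℝ} {a b : ℝ} (hab : a ≤ b)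
    (hφ : ContinuousOn φ (Icc a b)) :
    ContinuousOn (fun t => Real.exp (∫ s in t..b, φ s)) (Icc a b) := by
  rw [← uIcc_of_le hab] at hφ ⊢
  exact Real.continuous_exp.comp_continuousOn
    (intervalIntegral.continuousOn_primitive_interval_left hφ.integrableOn_uIcc)

theorem eq_sub_mul_of_hasDerivWithinAt {a b ξ : ℝ} {F k μ h : ℝ → ℝ}
    (hk : ∀ t ∈ Icc a b, HasDerivWithinAt k (F t) (Icc a b) t) (hk_left : k a = 0)
    (hμ : ∀ t ∈ Icc a b, HasDerivWithinAt μ (-F t * h t) (Icc a b) t)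
    (hh : ∀ t ∈ Icc a b, HasDerivWithinAt h 0 (Icc a b) t) (hμ_left : μ a = ξ) :
    ∀ t ∈ Icc a b, μ t = ξ - h a * k t ∧ h t = h a := by
  have h_const := eq_of_hasDerivWithinAt_Icc_zero hh
  have hμk : ∀ t ∈ Icc a b, HasDerivWithinAt (fun s => μ s + h a * k s) 0 (Icc a b) t := by
    intro t ht
    refine ((hμ t ht).add ((hk t ht).const_mul (h a))).congr_deriv ?_
    rw [h_const t ht]
    ring
  intro t ht
  have hμk_const := eq_of_hasDerivWithinAt_Icc_zero hμk t ht
  simp only [hk_left, hμ_left, mul_zero, add_zero] at hμk_const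
  exact ⟨by linarith, h_const t ht⟩

theorem eq_clip_sub_mul_iff {g : ℝ → ℝ} {a b ξ A : ℝ} (hb : 0 < b)
    (hg : ∀ x, g x = if |x| ≤ b then -x / b else -Real.sign x) (hξ : |ξ| < a) :
    A = g (ξ - A * (a + b)) ↔ A ∈ ({-1, ξ / a, 1} : Set ℝ) := by
  have ha : 0 < a := (abs_nonneg ξ).trans_lt hξ
  obtain ⟨hξ_lower, hξ_upper⟩ := abs_lt.1 hξ
  simp only [mem_insert_iff, mem_singleton_iff, hg]
  constructor
  · intro hA
    split_ifs at hA with hx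
    · right; left
      rw [eq_div_iff hb.ne'] at hA
      rw [eq_div_iff ha.ne']
      linarith
    · rcases lt_trichotomy (ξ - A * (a + b)) 0 with hneg | hzero | hpos
      · right; right
        rwa [Real.sign_of_neg hneg, neg_neg] at hA
      · rw [hzero, abs_zero] at hx
        exact absurd hb.le hx
      · left
        rwa [Real.sign_of_pos hpos] at hA
  · rintro (rfl | rfl | rfl)
    · have hpos : 0 < ξ - -1 * (a + b) := by linarith
      rw [if_neg (by rw [abs_of_pos hpos]; linarith), Real.sign_of_pos hpos]
    · have hx : ξ - ξ / a * (a + b) = -(ξ / a * b) := by field_simp; ring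
      have hx_le : |ξ / a * b| ≤ b := by
        rw [abs_mul, abs_div, abs_of_pos ha, abs_of_pos hb]
        exact mul_le_of_le_one_left hb.le ((div_le_one ha).2 hξ.le)
      rw [hx, abs_neg, if_pos hx_le, neg_neg, mul_div_assoc, div_self hb.ne', mul_one]
    · have hneg : ξ - 1 * (a + b) < 0 := by linarith
      rw [if_neg (by rw [abs_of_neg hneg]; linarith), Real.sign_of_neg hneg, neg_neg]

theorem fbsde_no_common_noise_three_solutions_general_init_general
    (T κ δ ξ : ℝ) (hδ : δ ∈ Set.Ioo 0 T)
    (η w r k g : ℝ → ℝ)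
    (hη : ∀ t ∈ Set.Icc (0:ℝ) T,
      HasDerivWithinAt η (η t ^ 2 - 2 * κ * η t - 1) (Set.Icc (0:ℝ) T) t)
    (hw : ∀ t, w t = Real.exp (∫ s in t..T, (-κ + η s)))
    (hr : ∀ t, r t = ∫ s in t..T, ((w s) ^ 2)⁻¹)
    (hk : ∀ t, k t = ∫ s in (0:ℝ)..t, ((w s) ^ 2)⁻¹)
    (hrδ : 0 < r δ)
    (hg : ∀ x, g x = if |x| ≤ r δ then -x / r δ else -Real.sign x)
    (hξ : |ξ| < k δ) :
    (∀ A ∈ ({-1, ξ / k δ, 1} : Set ℝ),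
      (∀ t ∈ Set.Icc (0:ℝ) T,
        HasDerivWithinAt (fun s => ξ - A * k s) (-((w t) ^ 2)⁻¹ * A) (Set.Icc (0:ℝ) T) t) ∧
      ξ - A * k 0 = ξ ∧ A = g (ξ - A * k T)) ∧
    (∀ μ h : ℝ → ℝ,
      (∀ t ∈ Set.Icc (0:ℝ) T,
        HasDerivWithinAt μ (-((w t) ^ 2)⁻¹ * h t) (Set.Icc (0:ℝ) T) t) →
      (∀ t ∈ Set.Icc (0:ℝ) T, HasDerivWithinAt h 0 (Set.Icc (0:ℝ) T) t) →
      μ 0 = ξ → h T = g (μ T) →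
      ∃ A ∈ ({-1, ξ / k δ, 1} : Set ℝ),
        ∀ t ∈ Set.Icc (0:ℝ) T, μ t = ξ - A * k t ∧ h t = A) := by
  obtain ⟨hδ_pos, hδ_lt⟩ := hδ
  have hT_mem : T ∈ Icc 0 T := right_mem_Icc.2 (hδ_pos.trans hδ_lt).le
  have hw_cont : ContinuousOn w (Icc 0 T) := by
    rw [funext hw]
    exact continuousOn_exp_integral_Icc hT_mem.1
      (continuousOn_const.add fun t ht => (hη t ht).continuousWithinAt)
  have hF_cont : ContinuousOn (fun s => ((w s) ^ 2)⁻¹) (Icc 0 T) :=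
    (hw_cont.pow 2).inv₀ fun t _ => pow_ne_zero 2 (by rw [hw]; positivity)
  have hk_deriv : ∀ t ∈ Icc 0 T, HasDerivWithinAt k ((w t) ^ 2)⁻¹ (Icc 0 T) t := by
    rw [funext hk]
    exact fun t ht => hF_cont.hasDerivWithinAt_integral_Icc ht
  have hk_zero : k 0 = 0 := by rw [hk, intervalIntegral.integral_same]
  have hk_T : k T = k δ + r δ := by
    rw [hk, hk, hr]
    exact (intervalIntegral.integral_add_adjacent_intervals
      ((hF_cont.mono (Icc_subset_Icc le_rfl hδ_lt.le)).intervalIntegrable_of_Icc hδ_pos.le)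
      ((hF_cont.mono (Icc_subset_Icc hδ_pos.le le_rfl)).intervalIntegrable_of_Icc hδ_lt.le)).symm
  have h_fixed (A : ℝ) := eq_clip_sub_mul_iff (A := A) hrδ hg hξ
  refine ⟨fun A hA => ⟨fun t ht => ?_, by rw [hk_zero, mul_zero, sub_zero], ?_⟩,
    fun μ h hμ hh hμ_zero hh_T => ?_⟩
  · refine (((hk_deriv t ht).const_mul A).const_sub ξ).congr_deriv ?_
    ring
  · rw [hk_T]
    exact (h_fixed A).2 hA
  · have hsol := eq_sub_mul_of_hasDerivWithinAt hk_deriv hk_zero hμ hh hμ_zero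
    refine ⟨h 0, (h_fixed (h 0)).1 ?_, hsol⟩
    rw [← hk_T, ← (hsol T hT_mem).1, ← (hsol T hT_mem).2, hh_T]

/-- For `|ξ| < k_δ`, the deterministic forward–backward system `μ' = −w⁻²·h`,
`h' = 0` on `[0,T]` with `μ(0) = ξ`, `h(T) = g(μ(T))` has exactly three solutions,
namely `(μ(t), h(t)) = (ξ − A·k_t, A)` for `A ∈ {−1, ξ/k_δ, 1}`. -/
theorem fbsde_no_common_noise_three_solutions_general_init
    (T κ δ ξ : ℝ) (hT : 0 < T) (hδ : δ ∈ Set.Ioo 0 T)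
    (η w r k g : ℝ → ℝ)
    (hη : ∀ t ∈ Set.Icc (0:ℝ) T,
      HasDerivWithinAt η (η t ^ 2 - 2 * κ * η t - 1) (Set.Icc (0:ℝ) T) t)
    (hηT : η T = 1)
    (hw : ∀ t, w t = Real.exp (∫ s in t..T, (-κ + η s)))
    (hr : ∀ t, r t = ∫ s in t..T, ((w s) ^ 2)⁻¹)
    (hk : ∀ t, k t = ∫ s in (0:ℝ)..t, ((w s) ^ 2)⁻¹)
    (hrδ : 0 < r δ)
    (hg : ∀ x, g x = if |x| ≤ r δ then -x / r δ else -Real.sign x)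
    (hξ : |ξ| < k δ) :
    (∀ A ∈ ({-1, ξ / k δ, 1} : Set ℝ),
      (∀ t ∈ Set.Icc (0:ℝ) T,
        HasDerivWithinAt (fun s => ξ - A * k s) (-((w t) ^ 2)⁻¹ * A) (Set.Icc (0:ℝ) T) t) ∧
      ξ - A * k 0 = ξ ∧ A = g (ξ - A * k T)) ∧
    (∀ μ h : ℝ → ℝ,
      (∀ t ∈ Set.Icc (0:ℝ) T,
        HasDerivWithinAt μ (-((w t) ^ 2)⁻¹ * h t) (Set.Icc (0:ℝ) T) t) →
      (∀ t ∈ Set.Icc (0:ℝ) T, HasDerivWithinAt h 0 (Set.Icc (0:ℝ) T) t) →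
      μ 0 = ξ → h T = g (μ T) →
      ∃ A ∈ ({-1, ξ / k δ, 1} : Set ℝ),
        ∀ t ∈ Set.Icc (0:ℝ) T, μ t = ξ - A * k t ∧ h t = A) :=
  fbsde_no_common_noise_three_solutions_general_init_general T κ δ ξ hδ η w r k g hη hw hr hk hrδ hg
    hξ
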